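/- arXiv:2003.00307 — 2 statements merged into one kernel-verified Lean document; each statement's English description precedes it below -/
import Mathlib

section
/- Suppose L : ℝ^m → ℝ is non-negative, β-smooth, and satisfies the μ-PL* condition in the ball B(w₀, R) with R = 2√(2β L(w₀))/μ. Then gradient descent w_{t+1} = w_t - (1/β) ∇L(w_t) stays in B(w₀, R) for all t and satisfies L(w_t) ≤ (1 - μ/β)^t L(w₀). -/
/-!
Smoothness makes the step `w ↦ w - β⁻¹ ∇L(w)` decrease `L` by at least `‖∇L(w)‖² / (2β)`.
Under PL* this is a contraction `L ↦ (1 - μ/β) L`, and since `L ≥ 0` it also bounds the step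
length `‖∇L(w)‖ / β` by `√(2β L(w)) / β`. As long as the iterates stay in the ball, the losses
decay geometrically, so the step lengths decay like `√(1 - μ/β)^t` and sum to at most `R`;
a strong induction on `t` closes the loop.
-/

open RealInnerProductSpace Finset

theorem geom_sum_sqrt_one_sub_le {a : ℝ} (ha : 0 < a) (ha1 : a ≤ 1) (n : ℕ) :
    ∑ k ∈ range n, √(1 - a) ^ k ≤ 2 / a := by
  set q := √(1 - a)
  have hq0 : 0 ≤ q := Real.sqrt_nonneg _
  have hqsq : q ^ 2 = 1 - a := Real.sq_sqrt (by linarith)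
  have hq1 : q < 1 := by nlinarith
  calc ∑ k ∈ range n, q ^ k ≤ q ^ 0 / (1 - q) := by
        rw [← Nat.Ico_zero_eq_range]; exact geom_sum_Ico_le_of_lt_one hq0 hq1
    _ ≤ 2 / a := by
        rw [pow_zero, div_le_div_iff₀ (by linarith) ha]
        -- `a = (1 - q) * (1 + q) ≤ 2 * (1 - q)`
        nlinarith

section GradientDescent

variable {E : Type*} [NormedAddCommGroup E] [InnerProductSpace ℝ E]
  {L : E → ℝ} {G : E → E} {β μ : ℝ}

theorem gradient_step_sufficient_decrease (hβ : 0 < β)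
    (hsmooth : ∀ w v, L v ≤ L w + ⟪G w, v - w⟫ + (β / 2) * ‖v - w‖ ^ 2) (w : E) :
    L (w - (1 / β) • G w) ≤ L w - ‖G w‖ ^ 2 / (2 * β) := by
  have h := hsmooth w (w - (1 / β) • G w)
  rw [sub_sub_cancel_left, inner_neg_right, real_inner_smul_right, real_inner_self_eq_norm_sq,
    norm_neg, norm_smul, Real.norm_of_nonneg (by positivity)] at h
  have e : L w + -(1 / β * ‖G w‖ ^ 2) + β / 2 * (1 / β * ‖G w‖) ^ 2
      = L w - ‖G w‖ ^ 2 / (2 * β) := by field_simp; ring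
  linarith

theorem norm_sq_le_two_mul_of_smooth (hβ : 0 < β) (hnn : ∀ w, 0 ≤ L w)
    (hsmooth : ∀ w v, L v ≤ L w + ⟪G w, v - w⟫ + (β / 2) * ‖v - w‖ ^ 2) (w : E) :
    ‖G w‖ ^ 2 ≤ 2 * β * L w := by
  have h : ‖G w‖ ^ 2 / (2 * β) ≤ L w := by
    linarith [gradient_step_sufficient_decrease hβ hsmooth w, hnn (w - (1 / β) • G w)]
  rwa [div_le_iff₀ (by positivity), mul_comm] at h

theorem gradient_step_le_mul_of_pl (hβ : 0 < β)
    (hsmooth : ∀ w v, L v ≤ L w + ⟪G w, v - w⟫ + (β / 2) * ‖v - w‖ ^ 2) {w : E}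
    (hPL : μ * L w ≤ (1 / 2) * ‖G w‖ ^ 2) :
    L (w - (1 / β) • G w) ≤ (1 - μ / β) * L w := by
  have h := gradient_step_sufficient_decrease hβ hsmooth w
  have e : (1 - μ / β) * L w = L w - 2 * (μ * L w) / (2 * β) := by field_simp
  rw [e]
  linarith [div_le_div_of_nonneg_right (by linarith : 2 * (μ * L w) ≤ ‖G w‖ ^ 2)
    (by positivity : 0 ≤ 2 * β)]

variable {w : ℕ → E}

theorem loss_le_geometric_of_pl (hstep : ∀ t, w (t + 1) = w t - (1 / β) • G (w t))
    (hβ : 0 < β) (hμβ : μ ≤ β)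
    (hsmooth : ∀ w v, L v ≤ L w + ⟪G w, v - w⟫ + (β / 2) * ‖v - w‖ ^ 2) (t : ℕ)
    (hPL : ∀ k < t, μ * L (w k) ≤ (1 / 2) * ‖G (w k)‖ ^ 2) :
    L (w t) ≤ (1 - μ / β) ^ t * L (w 0) := by
  induction t with
  | zero => simp
  | succ t ih =>
    have hθ : 0 ≤ 1 - μ / β := sub_nonneg.2 ((div_le_one hβ).2 hμβ)
    calc L (w (t + 1)) ≤ (1 - μ / β) * L (w t) := by
          rw [hstep]; exact gradient_step_le_mul_of_pl hβ hsmooth (hPL t t.lt_succ_self)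
      _ ≤ (1 - μ / β) * ((1 - μ / β) ^ t * L (w 0)) :=
          mul_le_mul_of_nonneg_left (ih fun k hk => hPL k (hk.trans t.lt_succ_self)) hθ
      _ = (1 - μ / β) ^ (t + 1) * L (w 0) := by ring

theorem dist_le_of_loss_le_geometric (hstep : ∀ t, w (t + 1) = w t - (1 / β) • G (w t))
    (hβ : 0 < β) (hμ : 0 < μ) (hμβ : μ ≤ β)
    (hnn : ∀ w, 0 ≤ L w)
    (hsmooth : ∀ w v, L v ≤ L w + ⟪G w, v - w⟫ + (β / 2) * ‖v - w‖ ^ 2) (t : ℕ)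
    (hL : ∀ k < t, L (w k) ≤ (1 - μ / β) ^ k * L (w 0)) :
    dist (w t) (w 0) ≤ 2 * √(2 * β * L (w 0)) / μ := by
  set c := √(2 * β * L (w 0)) / β
  have hθ : 0 ≤ 1 - μ / β := sub_nonneg.2 ((div_le_one hβ).2 hμβ)
  have hstep_le : ∀ {k}, k < t → dist (w k) (w (k + 1)) ≤ c * √(1 - μ / β) ^ k := by
    intro k hk
    have hG : ‖G (w k)‖ ≤ √(2 * β * L (w 0)) * √(1 - μ / β) ^ k := by
      rw [← pow_le_pow_iff_left₀ (norm_nonneg _) (by positivity) two_ne_zero, mul_pow,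
        ← pow_mul, mul_comm k, pow_mul, Real.sq_sqrt (by positivity [hnn (w 0)]),
        Real.sq_sqrt hθ]
      calc ‖G (w k)‖ ^ 2 ≤ 2 * β * L (w k) := norm_sq_le_two_mul_of_smooth hβ hnn hsmooth _
        _ ≤ 2 * β * ((1 - μ / β) ^ k * L (w 0)) :=
            mul_le_mul_of_nonneg_left (hL k hk) (by positivity)
        _ = _ := by ring
    rw [dist_eq_norm, hstep, sub_sub_cancel, norm_smul, Real.norm_of_nonneg (by positivity)]
    calc 1 / β * ‖G (w k)‖ ≤ 1 / β * (√(2 * β * L (w 0)) * √(1 - μ / β) ^ k) :=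
          mul_le_mul_of_nonneg_left hG (by positivity)
      _ = c * √(1 - μ / β) ^ k := by ring
  calc dist (w t) (w 0) = dist (w 0) (w t) := dist_comm _ _
    _ ≤ ∑ k ∈ range t, c * √(1 - μ / β) ^ k := dist_le_range_sum_of_dist_le t hstep_le
    _ ≤ c * (2 / (μ / β)) := by
        rw [← mul_sum]
        exact mul_le_mul_of_nonneg_left
          (geom_sum_sqrt_one_sub_le (div_pos hμ hβ) ((div_le_one hβ).2 hμβ) t) (by positivity)
    _ = 2 * √(2 * β * L (w 0)) / μ := by simp only [c]; field_simp

end GradientDescent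

/-- If `L` is non-negative, β-smooth, and μ-PL* in the ball `B(w₀, R)` with
`R = 2√(2β L(w₀))/μ`, then gradient descent with step size `1/β` stays in the
ball and converges at rate `L(w_t) ≤ (1 - μ/β)^t L(w₀)`. -/
theorem stmt4 {m : ℕ} (L : EuclideanSpace ℝ (Fin m) → ℝ) (β μ : ℝ)
    (w0 : EuclideanSpace ℝ (Fin m))
    (hβ : 0 < β) (hμ : 0 < μ) (hμβ : μ ≤ β)
    (hnn : ∀ w, 0 ≤ L w)
    (hsmooth : ∀ w v, L v ≤ L w + ⟪gradient L w, v - w⟫ + (β / 2) * ‖v - w‖ ^ 2)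
    (R : ℝ) (hR : R = 2 * Real.sqrt (2 * β * L w0) / μ)
    (hPLstar : ∀ w ∈ Metric.closedBall w0 R, μ * L w ≤ (1 / 2) * ‖gradient L w‖ ^ 2)
    (w : ℕ → EuclideanSpace ℝ (Fin m)) (hw0 : w 0 = w0)
    (hstep : ∀ t, w (t + 1) = w t - (1 / β) • gradient L (w t)) :
    ∀ t, w t ∈ Metric.closedBall w0 R ∧ L (w t) ≤ (1 - μ / β) ^ t * L w0 := by
  subst hw0 hR
  have hball (t : ℕ) : w t ∈ Metric.closedBall (w 0) (2 * √(2 * β * L (w 0)) / μ) :=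
    Nat.strong_induction_on t fun t ih =>
      dist_le_of_loss_le_geometric hstep hβ hμ hμβ hnn hsmooth t fun k hk =>
        loss_le_geometric_of_pl hstep hβ hμβ hsmooth k fun j hj =>
          hPLstar _ (ih j (hj.trans hk))
  exact fun t => ⟨hball t,
    loss_le_geometric_of_pl hstep hβ hμβ hsmooth t fun k _ => hPLstar _ (hball k)⟩
end

section
/- Suppose L : ℝ^m → ℝ is non-negative, β-smooth, and satisfies the μ-PL* condition in the ball B(w₀, R) with R = 2√(2β L(w₀))/μ. Then there exists a global minimum w* ∈ B(w₀, R) with L(w*) = 0. -/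
open RealInnerProductSpace

/-!
Gradient descent with step `1/β` decreases `L` by at least `‖∇L‖² / (2β)` per step. Inside the
ball, the PL* inequality turns this into the linear rate `L(w_{k+1}) ≤ (1 - μ/β) L(w_k)`, while
non-negativity gives `‖∇L‖² ≤ 2β L`, so the `k`-th step has length at most
`√(2β L(w₀))/β · s^k` with `s = √(1 - μ/β)`. Since `1 - s ≥ μ/(2β)`, the total path length is
at most `R`: the iterates never leave the ball, form a Cauchy sequence, and their limit is a zero
of `L`.
-/

open Metric Filter Topology Finset

variable {E : Type*} [NormedAddCommGroup E] [InnerProductSpace ℝ E] [CompleteSpace E]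

/-- The form of `β`-smoothness used in the descent lemma. -/
def HasQuadraticUpperBound (L : E → ℝ) (β : ℝ) : Prop :=
  ∀ w v, L v ≤ L w + ⟪gradient L w, v - w⟫ + (β / 2) * ‖v - w‖ ^ 2

noncomputable def gradientStep (L : E → ℝ) (β : ℝ) (w : E) : E := w - β⁻¹ • gradient L w

namespace gradientStep

variable {L : E → ℝ} {β : ℝ}

theorem dist_eq (hβ : 0 < β) (w : E) : dist (gradientStep L β w) w = ‖gradient L w‖ / β := by
  rw [dist_eq_norm, gradientStep, sub_sub_cancel_left, norm_neg, norm_smul, Real.norm_eq_abs,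
    abs_of_pos (inv_pos.mpr hβ), inv_mul_eq_div]

theorem loss_le (hβ : 0 < β) (hL : HasQuadraticUpperBound L β) (w : E) :
    L (gradientStep L β w) ≤ L w - ‖gradient L w‖ ^ 2 / (2 * β) := by
  have h := hL w (gradientStep L β w)
  rw [gradientStep, sub_sub_cancel_left, norm_neg, norm_smul, Real.norm_eq_abs,
    abs_of_pos (inv_pos.mpr hβ), inner_neg_right, real_inner_smul_right,
    real_inner_self_eq_norm_sq] at h
  calc L (gradientStep L β w)
      ≤ L w + -(β⁻¹ * ‖gradient L w‖ ^ 2) + β / 2 * (β⁻¹ * ‖gradient L w‖) ^ 2 := h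
    _ = L w - ‖gradient L w‖ ^ 2 / (2 * β) := by field_simp; ring

theorem norm_gradient_sq_le (hβ : 0 < β) (hL : HasQuadraticUpperBound L β)
    (hnn : ∀ w, 0 ≤ L w) (w : E) : ‖gradient L w‖ ^ 2 ≤ 2 * β * L w := by
  have h := (hnn _).trans (loss_le hβ hL w)
  rw [sub_nonneg, div_le_iff₀ (by positivity)] at h
  linarith

theorem loss_le_of_PL {μ : ℝ} (hβ : 0 < β) (hL : HasQuadraticUpperBound L β) {w : E}
    (hPL : μ * L w ≤ 1 / 2 * ‖gradient L w‖ ^ 2) :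
    L (gradientStep L β w) ≤ (1 - μ / β) * L w := by
  have h := loss_le hβ hL w
  have hPL' : μ / β * L w ≤ ‖gradient L w‖ ^ 2 / (2 * β) := by
    rw [div_mul_eq_mul_div, div_le_div_iff₀ hβ (by positivity)]
    nlinarith
  linarith

theorem dist_le_of_loss_le {t a : ℝ} (hβ : 0 < β) (hL : HasQuadraticUpperBound L β)
    (hnn : ∀ w, 0 ≤ L w) (ht : 0 ≤ t) {w : E} (hw : L w ≤ t ^ 2 * a) :
    dist (gradientStep L β w) w ≤ √(2 * β * a) / β * t := by
  have hgrad : ‖gradient L w‖ ≤ t * √(2 * β * a) := by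
    rw [← Real.sqrt_sq ht, ← Real.sqrt_mul (by positivity)]
    refine Real.le_sqrt_of_sq_le ((norm_gradient_sq_le hβ hL hnn w).trans ?_)
    nlinarith
  rw [dist_eq hβ, div_mul_eq_mul_div, mul_comm _ t]
  exact div_le_div_of_nonneg_right hgrad hβ.le

theorem iterate_loss_le_and_mem_closedBall {s R : ℝ} (hβ : 0 < β) (hL : HasQuadraticUpperBound L β)
    (hnn : ∀ w, 0 ≤ L w) (hs0 : 0 ≤ s) (hs1 : s < 1) (w0 : E)
    (hcontract : ∀ w ∈ closedBall w0 R, L (gradientStep L β w) ≤ s ^ 2 * L w)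
    (hR : √(2 * β * L w0) / β / (1 - s) ≤ R) (k : ℕ) :
    L ((gradientStep L β)^[k] w0) ≤ (s ^ k) ^ 2 * L w0 ∧
      (gradientStep L β)^[k] w0 ∈ closedBall w0 R := by
  set C := √(2 * β * L w0) / β
  have hpath (k : ℕ) : C * ∑ i ∈ range k, s ^ i ≤ R := by
    have hgeom := geom_sum_Ico_le_of_lt_one (m := 0) (n := k) hs0 hs1
    rw [← range_eq_Ico, pow_zero] at hgeom
    refine le_trans ?_ hR
    rw [div_eq_mul_one_div C]
    exact mul_le_mul_of_nonneg_left hgeom (by positivity)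
  suffices h : ∀ k, L ((gradientStep L β)^[k] w0) ≤ (s ^ k) ^ 2 * L w0 ∧
      dist ((gradientStep L β)^[k] w0) w0 ≤ C * ∑ i ∈ range k, s ^ i from
    ⟨(h k).1, mem_closedBall.mpr ((h k).2.trans (hpath k))⟩
  intro k
  induction k with
  | zero => simp
  | succ k ih =>
    obtain ⟨hloss, hdist⟩ := ih
    set u := (gradientStep L β)^[k] w0
    have hball : u ∈ closedBall w0 R := mem_closedBall.mpr (hdist.trans (hpath k))
    rw [Function.iterate_succ_apply']
    constructor
    · calc L (gradientStep L β u) ≤ s ^ 2 * L u := hcontract u hball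
        _ ≤ s ^ 2 * ((s ^ k) ^ 2 * L w0) := by gcongr
        _ = (s ^ (k + 1)) ^ 2 * L w0 := by ring
    · calc dist (gradientStep L β u) w0 ≤ dist (gradientStep L β u) u + dist u w0 :=
          dist_triangle _ _ _
        _ ≤ C * s ^ k + C * ∑ i ∈ range k, s ^ i :=
          add_le_add (dist_le_of_loss_le hβ hL hnn (pow_nonneg hs0 k) hloss) hdist
        _ = C * ∑ i ∈ range (k + 1), s ^ i := by rw [sum_range_succ]; ring

end gradientStep

theorem half_le_one_sub_sqrt_one_sub {x : ℝ} (hx : x ≤ 2) : x / 2 ≤ 1 - √(1 - x) := by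
  have : √(1 - x) ≤ 1 - x / 2 := Real.sqrt_le_iff.mpr ⟨by linarith, by nlinarith [sq_nonneg x]⟩
  linarith

theorem div_div_one_sub_sqrt_one_sub_le {D β μ : ℝ} (hμ : 0 < μ) (hμβ : μ ≤ β) (hD : 0 ≤ D) :
    D / β / (1 - √(1 - μ / β)) ≤ 2 * D / μ := by
  have hβ : 0 < β := hμ.trans_le hμβ
  have hgap := half_le_one_sub_sqrt_one_sub (x := μ / β)
    (by linarith [(div_le_one hβ).mpr hμβ])
  rw [div_le_iff₀ (by linarith [div_pos hμ hβ])]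
  calc D / β = 2 * D / μ * (μ / β / 2) := by field_simp
    _ ≤ 2 * D / μ * (1 - √(1 - μ / β)) := by gcongr

/-- If `L` is non-negative, β-smooth, and μ-PL* in the ball `B(w₀, R)` with
`R = 2√(2β L(w₀))/μ`, then there exists a global minimum `w* ∈ B(w₀, R)`
with `L(w*) = 0`. -/
theorem stmt5 {m : ℕ} (L : EuclideanSpace ℝ (Fin m) → ℝ) (β μ : ℝ)
    (w0 : EuclideanSpace ℝ (Fin m))
    (hβ : 0 < β) (hμ : 0 < μ) (hμβ : μ ≤ β)
    (hdiff : Differentiable ℝ L)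
    (hnn : ∀ w, 0 ≤ L w)
    (hsmooth : ∀ w v, L v ≤ L w + ⟪gradient L w, v - w⟫ + (β / 2) * ‖v - w‖ ^ 2)
    (R : ℝ) (hR : R = 2 * Real.sqrt (2 * β * L w0) / μ)
    (hPLstar : ∀ w ∈ Metric.closedBall w0 R, μ * L w ≤ (1 / 2) * ‖gradient L w‖ ^ 2) :
    ∃ wstar ∈ Metric.closedBall w0 R, (∀ v, L wstar ≤ L v) ∧ L wstar = 0 := by
  have hL : HasQuadraticUpperBound L β := hsmooth
  set s := √(1 - μ / β)
  have hs0 : 0 ≤ s := Real.sqrt_nonneg _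
  have hs1 : s < 1 := (Real.sqrt_lt' one_pos).mpr (by linarith [div_pos hμ hβ])
  have hs2 : s ^ 2 = 1 - μ / β := Real.sq_sqrt (sub_nonneg.mpr ((div_le_one hβ).mpr hμβ))
  set w : ℕ → EuclideanSpace ℝ (Fin m) := fun k => (gradientStep L β)^[k] w0
  have hbounds := gradientStep.iterate_loss_le_and_mem_closedBall hβ hL hnn hs0 hs1 w0
    (fun w hw => by rw [hs2]; exact gradientStep.loss_le_of_PL hβ hL (hPLstar w hw))
    (hR ▸ div_div_one_sub_sqrt_one_sub_le hμ hμβ (Real.sqrt_nonneg _))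
  have hcauchy : CauchySeq w := by
    refine cauchySeq_of_le_geometric s (√(2 * β * L w0) / β) hs1 fun k => ?_
    rw [dist_comm, show w (k + 1) = gradientStep L β (w k) from Function.iterate_succ_apply' ..]
    exact gradientStep.dist_le_of_loss_le hβ hL hnn (pow_nonneg hs0 k) (hbounds k).1
  obtain ⟨wstar, hlim⟩ := cauchySeq_tendsto_of_complete hcauchy
  have hloss_lim : Tendsto (fun k => L (w k)) atTop (𝓝 0) := by
    refine squeeze_zero (fun k => hnn _) (fun k => (hbounds k).1) ?_
    simpa using ((tendsto_pow_atTop_nhds_zero_of_lt_one hs0 hs1).pow 2).mul_const (L w0)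
  have hzero : L wstar = 0 :=
    tendsto_nhds_unique ((hdiff.continuous.tendsto wstar).comp hlim) hloss_lim
  have hmem : wstar ∈ closedBall w0 R :=
    isClosed_closedBall.mem_of_tendsto hlim (.of_forall fun k => (hbounds k).2)
  exact ⟨wstar, hmem, fun v => hzero ▸ hnn v, hzero⟩
end
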